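/- Let (𝔤, ω) be a symplectic Lie algebra with product xy on 𝔤 defined by ω(xy,z) = -ω(y,[x,z]). Then the product on 𝔤 × 𝔤* defined by (x,α)(y,β) := (xy, ad*_x β) is left symmetric, and its commutator equals the semidirect product Lie bracket [(x,α),(y,β)] = ([x,y], ad*_x β - ad*_y α) of 𝔤 ⋉_{ad*} 𝔤*. -/

import Mathlib

/-- The coadjoint action of `x : L` on the dual: `⟨coad x α, y⟩ = -⟨α, [x,y]⟩`. -/
noncomputable def coad {L : Type*} [LieRing L] [LieAlgebra ℝ L]
    (x : L) (α : Module.Dual ℝ L) : Module.Dual ℝ L :=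
  -(α ∘ₗ (LieAlgebra.ad ℝ L x))

/-- The product `(x,α)(y,β) = (xy, ad*_x β)` on `𝔤 × 𝔤*`. -/
noncomputable def sprod {L : Type*} [LieRing L] [LieAlgebra ℝ L]
    (p : L →ₗ[ℝ] L →ₗ[ℝ] L) (u v : L × Module.Dual ℝ L) : L × Module.Dual ℝ L :=
  (p u.1 v.1, coad u.1 v.2)

/-! The product `p` is the transpose of `-ad` under `ω`; closedness of `ω` says that its
commutator is the Lie bracket, and then left symmetry of `p` and of `sprod p` both reduce to the
Jacobi identity. -/

def IsLeftSymmetric {V : Type*} [AddCommGroup V] (m : V → V → V) : Prop :=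
  ∀ x y z, m (m x y) z - m x (m y z) = m (m y x) z - m y (m x z)

section Coadjoint

variable {L : Type*} [LieRing L] [LieAlgebra ℝ L]

lemma coad_apply (x : L) (α : Module.Dual ℝ L) (y : L) : coad x α y = -(α ⁅x, y⁆) := by
  simp [coad, LieAlgebra.ad_apply]

lemma coad_lie (x y : L) (α : Module.Dual ℝ L) :
    coad ⁅x, y⁆ α = coad x (coad y α) - coad y (coad x α) := by
  ext z
  simp only [LinearMap.sub_apply, coad_apply, neg_neg, lie_lie, map_sub]
  ring

lemma isLeftSymmetric_sprod {p : L →ₗ[ℝ] L →ₗ[ℝ] L} (hp : IsLeftSymmetric fun x y ↦ p x y)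
    (hcomm : ∀ x y : L, p x y - p y x = ⁅x, y⁆) : IsLeftSymmetric (sprod p) := by
  intro u v w
  have hcoad : coad (p u.1 v.1) w.2 - coad u.1 (coad v.1 w.2)
      = coad (p v.1 u.1) w.2 - coad v.1 (coad u.1 w.2) := by
    have hsub : coad (p u.1 v.1) w.2 - coad (p v.1 u.1) w.2 = coad ⁅u.1, v.1⁆ w.2 := by
      ext z
      rw [← hcomm]
      simp only [LinearMap.sub_apply, coad_apply, sub_lie, map_sub]
      ring
    rw [coad_lie, ← sub_eq_sub_iff_sub_eq_sub] at hsub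
    exact hsub
  simp only [sprod, Prod.mk_sub_mk, hp u.1 v.1 w.1, hcoad]

end Coadjoint

section Symplectic

variable {R L : Type*} [CommRing R] [LieRing L] [LieAlgebra R L] (ω : L →ₗ[R] Module.Dual R L)

lemma form_lie_eq (hskew : ∀ x y : L, ω x y = -ω y x)
    (hclosed : ∀ x y z : L, ω ⁅x, y⁆ z + ω ⁅y, z⁆ x + ω ⁅z, x⁆ y = 0) (x y z : L) :
    ω ⁅x, y⁆ z = ω x ⁅y, z⁆ - ω y ⁅x, z⁆ := by
  have h := hclosed x y z
  rw [← lie_skew z x, map_neg, LinearMap.neg_apply, hskew ⁅y, z⁆ x, hskew ⁅x, z⁆ y] at h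
  linear_combination h

variable {ω}

lemma eq_of_form_eq (hnondeg : ∀ x : L, ω x = 0 → x = 0) {a b : L}
    (h : ∀ z, ω a z = ω b z) : a = b :=
  sub_eq_zero.mp <| hnondeg _ <| LinearMap.ext fun z ↦ by simp [h]

variable (hskew : ∀ x y : L, ω x y = -ω y x) (hnondeg : ∀ x : L, ω x = 0 → x = 0)
  (hclosed : ∀ x y z : L, ω ⁅x, y⁆ z + ω ⁅y, z⁆ x + ω ⁅z, x⁆ y = 0)
  {p : L →ₗ[R] L →ₗ[R] L} (hp : ∀ x y z : L, ω (p x y) z = -(ω y ⁅x, z⁆))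
include hskew hnondeg hclosed hp

lemma sub_swap_eq_lie_of_form (x y : L) : p x y - p y x = ⁅x, y⁆ :=
  eq_of_form_eq hnondeg fun z ↦ by
    simp only [map_sub, LinearMap.sub_apply, hp, form_lie_eq ω hskew hclosed]
    ring

lemma isLeftSymmetric_of_form : IsLeftSymmetric fun x y ↦ p x y := by
  intro x y z
  refine eq_of_form_eq hnondeg fun w ↦ ?_
  have hlie : ω z ⁅p x y, w⁆ - ω z ⁅p y x, w⁆ = ω z ⁅x, ⁅y, w⁆⁆ - ω z ⁅y, ⁅x, w⁆⁆ := by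
    rw [← map_sub, ← sub_lie, sub_swap_eq_lie_of_form hskew hnondeg hclosed hp, lie_lie, map_sub]
  simp only [map_sub, LinearMap.sub_apply, hp, neg_neg]
  linear_combination -hlie

end Symplectic

theorem stmt13_general {L : Type*} [LieRing L] [LieAlgebra ℝ L]
    (ω : L →ₗ[ℝ] Module.Dual ℝ L)
    (hskew : ∀ x y : L, ω x y = - ω y x)
    (hnondeg : ∀ x : L, ω x = 0 → x = 0)
    (hclosed : ∀ x y z : L, ω ⁅x, y⁆ z + ω ⁅y, z⁆ x + ω ⁅z, x⁆ y = 0)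
    (p : L →ₗ[ℝ] L →ₗ[ℝ] L)
    (hp : ∀ x y z : L, ω (p x y) z = -(ω y ⁅x, z⁆)) :
    (∀ u v w : L × Module.Dual ℝ L,
      sprod p (sprod p u v) w - sprod p u (sprod p v w)
        = sprod p (sprod p v u) w - sprod p v (sprod p u w)) ∧
    (∀ u v : L × Module.Dual ℝ L,
      sprod p u v - sprod p v u = (⁅u.1, v.1⁆, coad u.1 v.2 - coad v.1 u.2)) := by
  have hcomm := sub_swap_eq_lie_of_form hskew hnondeg hclosed hp
  refine ⟨isLeftSymmetric_sprod (isLeftSymmetric_of_form hskew hnondeg hclosed hp) hcomm,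
    fun u v ↦ ?_⟩
  simp only [sprod, Prod.mk_sub_mk, hcomm]

/-- for a symplectic Lie algebra `(𝔤, ω)` with product `xy` given by
`ω(xy,z) = -ω(y,[x,z])`, the product `(x,α)(y,β) = (xy, ad*_x β)` on `𝔤 × 𝔤*` is left
symmetric and its commutator is the semidirect product bracket of `𝔤 ⋉_{ad*} 𝔤*`. -/
theorem stmt13 {L : Type*} [LieRing L] [LieAlgebra ℝ L] [FiniteDimensional ℝ L]
    (ω : L →ₗ[ℝ] Module.Dual ℝ L)
    (hskew : ∀ x y : L, ω x y = - ω y x)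
    (hnondeg : ∀ x : L, ω x = 0 → x = 0)
    (hclosed : ∀ x y z : L, ω ⁅x, y⁆ z + ω ⁅y, z⁆ x + ω ⁅z, x⁆ y = 0)
    (p : L →ₗ[ℝ] L →ₗ[ℝ] L)
    (hp : ∀ x y z : L, ω (p x y) z = -(ω y ⁅x, z⁆)) :
    (∀ u v w : L × Module.Dual ℝ L,
      sprod p (sprod p u v) w - sprod p u (sprod p v w)
        = sprod p (sprod p v u) w - sprod p v (sprod p u w)) ∧
    (∀ u v : L × Module.Dual ℝ L,
      sprod p u v - sprod p v u = (⁅u.1, v.1⁆, coad u.1 v.2 - coad v.1 u.2)) :=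
  stmt13_general ω hskew hnondeg hclosed p hp
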